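/- For the TRIP-Stern sequence for (e,e,e), the level sums satisfy the recurrence S(n) = 4·S(n−1) − 5·S(n−2) + 4·S(n−3) for all n ≥ 3, with initial values S(0) = 3, S(1) = 8, S(2) = 22. -/

import Mathlib

/-- `f₀(a,b,c) = (b,c,a+c)` for the triplet `(e,e,e)`. -/
def f0 (p : ℤ × ℤ × ℤ) : ℤ × ℤ × ℤ := (p.2.1, p.2.2, p.1 + p.2.2)

/-- `f₁(a,b,c) = (a,b,a+c)` for the triplet `(e,e,e)`. -/
def f1 (p : ℤ × ℤ × ℤ) : ℤ × ℤ × ℤ := (p.1, p.2.1, p.1 + p.2.2)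

/-- One step of the TRIP-Stern tree: apply `f₁` on a `true` and `f₀` on a `false`. -/
def step (p : ℤ × ℤ × ℤ) (i : Bool) : ℤ × ℤ × ℤ := if i then f1 p else f0 p

/-- `Δ(v) = f_{iₙ}(⋯ f_{i₁}(1,1,1) ⋯)`, applying `f_{i₁}` first. -/
def delta (v : List Bool) : ℤ × ℤ × ℤ := v.foldl step (1, 1, 1)

/-- `S n` is the sum of all three coordinates of all `2ⁿ` level-`n` triples. -/
def S (n : ℕ) : ℤ :=
  ∑ v : Fin n → Bool,
    ((delta (List.ofFn v)).1 + (delta (List.ofFn v)).2.1 + (delta (List.ofFn v)).2.2)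

/-!
The sum of the two children of a node `p = (a, b, c)`, `f₁ p + f₀ p = (a + b, b + c, 2a + 2c)`,
is linear in `p`, so the coordinate-wise sum of level `n` is `Aⁿ (1, 1, 1)` for the matrix `A` of
this map. Its characteristic polynomial is `x³ - 4x² + 5x - 4`, and Cayley–Hamilton gives the
recurrence.
-/

theorem sum_ofFn_succ_eq_sum_append {α M : Type*} [Fintype α] [AddCommMonoid M]
    (f : List α → M) (n : ℕ) :
    ∑ v : Fin (n + 1) → α, f (List.ofFn v) = ∑ w : Fin n → α, ∑ a, f (List.ofFn w ++ [a]) := by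
  rw [← Fintype.sum_equiv (Fin.snocEquiv fun _ => α) (fun p => f (List.ofFn (Fin.snoc p.2 p.1)))
    _ fun _ => rfl, Fintype.sum_prod_type, Finset.sum_comm]
  simp only [List.ofFn_succ', Fin.snoc_castSucc, Fin.snoc_last, List.concat_eq_append]

theorem delta_append_singleton (l : List Bool) (b : Bool) :
    delta (l ++ [b]) = step (delta l) b :=
  List.foldl_concat _ _ _ _

def childSum : ℤ × ℤ × ℤ →+ ℤ × ℤ × ℤ where
  toFun p := (p.1 + p.2.1, p.2.1 + p.2.2, 2 * p.1 + 2 * p.2.2)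
  map_zero' := rfl
  map_add' p q := by ext <;> simp only [Prod.fst_add, Prod.snd_add] <;> ring

theorem step_true_add_step_false (p : ℤ × ℤ × ℤ) :
    step p true + step p false = childSum p := by
  obtain ⟨a, b, c⟩ := p
  simp only [step, f0, f1, childSum, AddMonoidHom.coe_mk, ZeroHom.coe_mk, if_true,
    Bool.false_eq_true, if_false, Prod.mk_add_mk, Prod.mk.injEq, true_and]
  ring

theorem childSum_cubed (p : ℤ × ℤ × ℤ) :
    childSum (childSum (childSum p)) = 4 • childSum (childSum p) - 5 • childSum p + 4 • p := by
  obtain ⟨a, b, c⟩ := p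
  simp only [childSum, AddMonoidHom.coe_mk, ZeroHom.coe_mk, Prod.smul_mk, Prod.mk_add_mk,
    Prod.mk_sub_mk, Prod.mk.injEq]
  refine ⟨by ring, by ring, by ring⟩

def levelVector (n : ℕ) : ℤ × ℤ × ℤ := ∑ v : Fin n → Bool, delta (List.ofFn v)

theorem levelVector_eq_iterate (n : ℕ) : levelVector n = childSum^[n] (1, 1, 1) := by
  induction n with
  | zero => rfl
  | succ n ih =>
    rw [Function.iterate_succ_apply', ← ih, levelVector, levelVector, map_sum,
      sum_ofFn_succ_eq_sum_append]
    simp only [Fintype.sum_bool, delta_append_singleton, step_true_add_step_false]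

def coordSum : ℤ × ℤ × ℤ →+ ℤ where
  toFun p := p.1 + p.2.1 + p.2.2
  map_zero' := rfl
  map_add' p q := by simp only [Prod.fst_add, Prod.snd_add]; ring

theorem S_eq_coordSum_iterate (n : ℕ) : S n = coordSum (childSum^[n] (1, 1, 1)) := by
  rw [← levelVector_eq_iterate, levelVector, map_sum]
  rfl

/-- For the TRIP-Stern sequence for `(e,e,e)`, the level sums satisfy
`S(n) = 4·S(n−1) − 5·S(n−2) + 4·S(n−3)` for all `n ≥ 3`, with `S(0) = 3`, `S(1) = 8`,
`S(2) = 22`. -/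
theorem levelSum_recurrence_eee :
    S 0 = 3 ∧ S 1 = 8 ∧ S 2 = 22 ∧
    (∀ n : ℕ, 3 ≤ n → S n = 4 * S (n - 1) - 5 * S (n - 2) + 4 * S (n - 3)) := by
  simp only [S_eq_coordSum_iterate]
  refine ⟨rfl, rfl, rfl, fun n hn => ?_⟩
  obtain ⟨m, rfl⟩ : ∃ m, n = m + 3 := ⟨n - 3, by omega⟩
  simp only [Nat.add_sub_cancel, show m + 3 - 1 = m + 2 from rfl, show m + 3 - 2 = m + 1 from rfl,
    Function.iterate_succ_apply', childSum_cubed, map_add, map_sub, map_nsmul]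
  simp only [nsmul_eq_mul, Nat.cast_ofNat]
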